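/- arXiv:2004.13272 — 3 statements merged into one kernel-verified Lean document; each statement's English description precedes it below -/
import Mathlib

section
/- Let a1,a2,b1,b2,c1,c2 > 0 with a1·a2 > b1·b2 and Δ > 1, and let B1, B2 be defined as in the gauge transformation (B1 = (Δ−√(Δ²−1))·√(b1b2/(a1a2)), B2 = (Δ+√(Δ²−1))·√(b1b2/(a1a2))), with 0 < B1 < B2 < 1. Let κ = (1−B1)/(1−B2) and φ(z) = κz/((κ−1)z+1). Let 𝔥(x,y) = 2xy√(Δ²−1) − (√(a1a2/(b1b2)) − Δ + √(Δ²−1))x + (√(a1a2/(b1b2)) − Δ − √(Δ²−1))y. Then for s,t ∈ (0,1), 𝔥(s,t) = 0 if and only if t = φ(s). -/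
theorem stmt_5 (a1 a2 b1 b2 c1 c2 Δ B1 B2 κ : ℝ) (φ : ℝ → ℝ) (h : ℝ → ℝ → ℝ)
    (ha1 : 0 < a1) (ha2 : 0 < a2) (hb1 : 0 < b1) (hb2 : 0 < b2)
    (hc1 : 0 < c1) (hc2 : 0 < c2) (hab : b1 * b2 < a1 * a2)
    (hΔdef : Δ = (a1 * a2 + b1 * b2 - c1 * c2) / (2 * Real.sqrt (a1 * a2 * b1 * b2)))
    (hΔ : 1 < Δ)
    (hB1def : B1 = (Δ - Real.sqrt (Δ^2 - 1)) * Real.sqrt (b1 * b2 / (a1 * a2)))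
    (hB2def : B2 = (Δ + Real.sqrt (Δ^2 - 1)) * Real.sqrt (b1 * b2 / (a1 * a2)))
    (hB1pos : 0 < B1) (hB12 : B1 < B2) (hB2lt : B2 < 1)
    (hκ : κ = (1 - B1) / (1 - B2))
    (hφ : ∀ z : ℝ, φ z = κ * z / ((κ - 1) * z + 1))
    (hh : ∀ x y : ℝ, h x y =
      2 * x * y * Real.sqrt (Δ^2 - 1)
        - (Real.sqrt (a1 * a2 / (b1 * b2)) - Δ + Real.sqrt (Δ^2 - 1)) * x
        + (Real.sqrt (a1 * a2 / (b1 * b2)) - Δ - Real.sqrt (Δ^2 - 1)) * y)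
    (s t : ℝ) (hs : 0 < s) (hs1 : s < 1) (ht : 0 < t) (ht1 : t < 1) :
    h s t = 0 ↔ t = φ s := by
  set D := Real.sqrt (Δ^2 - 1) with hD
  set r := Real.sqrt (a1 * a2 / (b1 * b2)) with hr
  have hrpos : 0 < r := Real.sqrt_pos.mpr (by positivity)
  have hinv : Real.sqrt (b1 * b2 / (a1 * a2)) = 1 / r := by
    rw [one_div, hr, ← Real.sqrt_inv]
    congr 1
    field_simp
  have hDpos : 0 < D := Real.sqrt_pos.mpr (by nlinarith)
  have hB2' : B2 = (Δ + D) / r := by rw [hB2def, hinv]; ring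
  have he : Δ + D < r := by
    have h2 := hB2lt
    rw [hB2'] at h2
    exact (div_lt_one hrpos).mp h2
  have hepos : 0 < r - Δ - D := by linarith
  have hB1' : B1 = (Δ - D) / r := by rw [hB1def, hinv]; ring
  have hκ' : κ = (r - Δ + D) / (r - Δ - D) := by
    rw [hκ, hB1', hB2']
    rw [div_eq_div_iff (by rw [hB2'] at hB2lt; linarith) hepos.ne']
    field_simp
    ring
  have hκgt : 1 < κ := by
    rw [hκ', lt_div_iff₀ hepos]; linarith
  have hden : 0 < (κ - 1) * s + 1 := by nlinarith
  have key : h s t = (((κ - 1) * s + 1) * t - κ * s) * (r - Δ - D) := by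
    rw [hh, hκ']
    field_simp
    ring
  constructor
  · intro h0
    rw [key] at h0
    rcases mul_eq_zero.mp h0 with h1 | h1
    · rw [hφ, eq_div_iff hden.ne']
      linear_combination h1
    · exact absurd h1 hepos.ne'
  · intro h1
    rw [hφ, eq_div_iff hden.ne'] at h1
    rw [key]
    have : ((κ - 1) * s + 1) * t - κ * s = 0 := by linear_combination h1
    rw [this, zero_mul]
end

section
/- Under the same setup, for s,t ∈ (0,1), 𝔥(s,t) < 0 if and only if t < φ(s). -/
theorem stmt_6 (a1 a2 b1 b2 c1 c2 Δ B1 B2 κ : ℝ) (φ : ℝ → ℝ) (h : ℝ → ℝ → ℝ)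
    (ha1 : 0 < a1) (ha2 : 0 < a2) (hb1 : 0 < b1) (hb2 : 0 < b2)
    (hc1 : 0 < c1) (hc2 : 0 < c2) (hab : b1 * b2 < a1 * a2)
    (hΔdef : Δ = (a1 * a2 + b1 * b2 - c1 * c2) / (2 * Real.sqrt (a1 * a2 * b1 * b2)))
    (hΔ : 1 < Δ)
    (hB1def : B1 = (Δ - Real.sqrt (Δ^2 - 1)) * Real.sqrt (b1 * b2 / (a1 * a2)))
    (hB2def : B2 = (Δ + Real.sqrt (Δ^2 - 1)) * Real.sqrt (b1 * b2 / (a1 * a2)))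
    (hB1pos : 0 < B1) (hB12 : B1 < B2) (hB2lt : B2 < 1)
    (hκ : κ = (1 - B1) / (1 - B2))
    (hφ : ∀ z : ℝ, φ z = κ * z / ((κ - 1) * z + 1))
    (hh : ∀ x y : ℝ, h x y =
      2 * x * y * Real.sqrt (Δ^2 - 1)
        - (Real.sqrt (a1 * a2 / (b1 * b2)) - Δ + Real.sqrt (Δ^2 - 1)) * x
        + (Real.sqrt (a1 * a2 / (b1 * b2)) - Δ - Real.sqrt (Δ^2 - 1)) * y)
    (s t : ℝ) (hs : 0 < s) (hs1 : s < 1) (ht : 0 < t) (ht1 : t < 1) :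
    h s t < 0 ↔ t < φ s := by
  have hprod : 0 < a1 * a2 := by positivity
  have hbprod : 0 < b1 * b2 := by positivity
  set e := Real.sqrt (Δ^2 - 1) with hedef
  have he : 0 < e := Real.sqrt_pos.2 (by nlinarith)
  set q := Real.sqrt (b1 * b2 / (a1 * a2)) with hqdef
  set r := Real.sqrt (a1 * a2 / (b1 * b2)) with hrdef
  have hq : 0 < q := Real.sqrt_pos.2 (by positivity)
  have hr : 0 < r := Real.sqrt_pos.2 (by positivity)
  have hrq : r * q = 1 := by
    rw [hrdef, hqdef, ← Real.sqrt_mul (by positivity)]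
    rw [show a1 * a2 / (b1 * b2) * (b1 * b2 / (a1 * a2)) = 1 by field_simp]
    exact Real.sqrt_one
  have hBr1 : r * B1 = Δ - e := by
    rw [hB1def]; linear_combination (Δ - e) * hrq
  have hBr2 : r * B2 = Δ + e := by
    rw [hB2def]; linear_combination (Δ + e) * hrq
  have hc : Δ + e < r := by nlinarith [mul_lt_mul_of_pos_left hB2lt hr]
  have h2 : (0 : ℝ) < 1 - B2 := by linarith
  have hκc : κ * (r - Δ - e) = r - Δ + e := by
    rw [hκ, div_mul_eq_mul_div, div_eq_iff h2.ne']
    linear_combination (B2 - 1) * hBr1 + (1 - B1) * hBr2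
  have hκ1 : 1 < κ := by rw [hκ, lt_div_iff₀ h2]; linarith
  have hD : (0 : ℝ) < (κ - 1) * s + 1 := by nlinarith
  have key : (r - Δ - e) * (t * ((κ - 1) * s + 1) - κ * s)
      = 2 * s * t * e - (r - Δ + e) * s + (r - Δ - e) * t := by
    linear_combination (t * s - s) * hκc
  have hcc : (0 : ℝ) < r - Δ - e := by linarith
  rw [hh, hφ, lt_div_iff₀ hD, ← sub_neg (a := t * ((κ - 1) * s + 1)), ← key, mul_neg_iff]
  constructor
  · rintro (⟨h1, h2⟩ | ⟨h1, h2⟩) <;> linarith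
  · intro hx; exact Or.inl ⟨hcc, hx⟩
end

section
/- Let 0 < B1 < B2 < 1, κ = (1−B1)/(1−B2), φ(z) = κz/((κ−1)z+1). Suppose 0 < s ≤ t ≤ φ(s) with s,t ∈ (0,1]. Define s0 = (κs − t)/((κ−1)t) and t0 = (κs − t)/((κ−1)s). Then 0 < s0 ≤ t0 ≤ 1, t0 = φ(s0), and s/s0 = t/t0 = (κ−1)st/(κs − t) ∈ (0,1]. -/
/-! With `r = (κ - 1) s t / (κ s - t)` one has `s₀ = s / r` and `t₀ = t / r`. The graph of
`φ` is the line `κ / t - 1 / s = κ - 1` in reciprocal coordinates, and `κ / t - 1 / s` is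
homogeneous of degree `-1`, so dividing `(s, t)` by `r` lands on the graph. The hypothesis
`t ≤ φ s` is exactly `r ≤ 1`, and `s ≤ t` is exactly `t₀ ≤ 1`. -/

lemma one_lt_one_sub_div_one_sub {B1 B2 : ℝ} (hB12 : B1 < B2) (hB2 : B2 < 1) :
    1 < (1 - B1) / (1 - B2) := by
  rw [lt_div_iff₀ (by linarith)]
  linarith

section Rescaling

variable {κ s t : ℝ}

lemma mul_le_sub_of_le_div (hκ : 1 < κ) (hs : 0 < s)
    (h : t ≤ κ * s / ((κ - 1) * s + 1)) : (κ - 1) * s * t ≤ κ * s - t := by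
  rw [le_div_iff₀ (by nlinarith)] at h
  linarith

lemma graph_rescale_eq (hκ : 1 < κ) (hs : 0 < s) (ht : 0 < t) :
    κ * ((κ * s - t) / ((κ - 1) * t)) / ((κ - 1) * ((κ * s - t) / ((κ - 1) * t)) + 1) =
      (κ * s - t) / ((κ - 1) * s) := by
  have hκ1 : κ - 1 ≠ 0 := sub_ne_zero.mpr hκ.ne'
  have hden : (κ - 1) * ((κ * s - t) / ((κ - 1) * t)) + 1 = κ * s / t := by
    field_simp
    ring
  rw [hden]
  field_simp

end Rescaling

theorem stmt_7_general (B1 B2 κ : ℝ) (φ : ℝ → ℝ)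
    (hB12 : B1 < B2) (hB2 : B2 < 1)
    (hκ : κ = (1 - B1) / (1 - B2))
    (hφ : ∀ z : ℝ, φ z = κ * z / ((κ - 1) * z + 1))
    (s t s0 t0 : ℝ) (hs : 0 < s) (hst : s ≤ t) (htφ : t ≤ φ s)
    (hs0 : s0 = (κ * s - t) / ((κ - 1) * t))
    (ht0 : t0 = (κ * s - t) / ((κ - 1) * s)) :
    0 < s0 ∧ s0 ≤ t0 ∧ t0 ≤ 1 ∧ t0 = φ s0 ∧
      s / s0 = (κ - 1) * s * t / (κ * s - t) ∧
      t / t0 = (κ - 1) * s * t / (κ * s - t) ∧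
      0 < (κ - 1) * s * t / (κ * s - t) ∧ (κ - 1) * s * t / (κ * s - t) ≤ 1 := by
  have hκ1 : 1 < κ := hκ ▸ one_lt_one_sub_div_one_sub hB12 hB2
  have ht : 0 < t := hs.trans_le hst
  have hks : 0 < (κ - 1) * s := mul_pos (by linarith) hs
  have hkt : 0 < (κ - 1) * t := mul_pos (by linarith) ht
  have hr : (κ - 1) * s * t ≤ κ * s - t := mul_le_sub_of_le_div hκ1 hs (hφ s ▸ htφ)
  have hd : 0 < κ * s - t := (mul_pos hks ht).trans_le hr
  subst hs0 ht0
  refine ⟨div_pos hd hkt, ?_, ?_, ?_, ?_, ?_, div_pos (mul_pos hks ht) hd, (div_le_one hd).mpr hr⟩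
  · exact div_le_div_of_nonneg_left hd.le hks (by nlinarith)
  · rw [div_le_one hks]
    linarith
  · rw [hφ, graph_rescale_eq hκ1 hs ht]
  · rw [div_div_eq_mul_div]
    ring
  · rw [div_div_eq_mul_div]
    ring

theorem stmt_7 (B1 B2 κ : ℝ) (φ : ℝ → ℝ)
    (hB1 : 0 < B1) (hB12 : B1 < B2) (hB2 : B2 < 1)
    (hκ : κ = (1 - B1) / (1 - B2))
    (hφ : ∀ z : ℝ, φ z = κ * z / ((κ - 1) * z + 1))
    (s t s0 t0 : ℝ) (hs : 0 < s) (hst : s ≤ t) (ht1 : t ≤ 1) (htφ : t ≤ φ s)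
    (hs0 : s0 = (κ * s - t) / ((κ - 1) * t))
    (ht0 : t0 = (κ * s - t) / ((κ - 1) * s)) :
    0 < s0 ∧ s0 ≤ t0 ∧ t0 ≤ 1 ∧ t0 = φ s0 ∧
      s / s0 = (κ - 1) * s * t / (κ * s - t) ∧
      t / t0 = (κ - 1) * s * t / (κ * s - t) ∧
      0 < (κ - 1) * s * t / (κ * s - t) ∧ (κ - 1) * s * t / (κ * s - t) ≤ 1 :=
  stmt_7_general B1 B2 κ φ hB12 hB2 hκ hφ s t s0 t0 hs hst htφ hs0 ht0
end
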